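/- arXiv:2307.08061 — 3 statements merged into one kernel-verified Lean document; each statement's English description precedes it below -/
import Mathlib

section
/- Let K be a commutative ring with 2 invertible, u_1,...,u_a ∈ K, and suppose ω : ℕ → K is u-admissible (i.e. 1 - t/2 + Σ_{i≥0} ω_i t^{i+1} = (1 - (-1)^a t/2) ∏_{i=1}^a (1+u_i t)/(1-u_i t) in K[[t]]). Then for every odd positive integer k, 2ω_k = -ω_{k-1} + Σ_{j=1}^{k} (-1)^{j-1} ω_{j-1} ω_{k-j}. -/
/-!
Put `G(t) = 1 - t/2 + ∑ ω_i t^(i+1)`, `Q(t) = ∏ (1 + u_i t)` and `L(t) = 1 - (-1)^a t/2`, so that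
u-admissibility reads `G(t) Q(-t) = L(t) Q(t)`. Substituting `t ↦ -t` and multiplying the two
identities, the unit `Q(t) Q(-t)` cancels and `G(t) G(-t) = L(t) L(-t) = 1 - t²/4`. Writing
`G = H - t/2`, this becomes `H(t) H(-t) + (t/2)(H(t) - H(-t)) = 1`; for odd `k` the coefficient
of `t^(k+1)` of the left side is `2ω_k + ω_{k-1} - ∑ (-1)^i ω_i ω_{k-1-i}`.
-/

open PowerSeries Finset

theorem Finset.Nat.sum_Icc_one_succ_eq_sum_antidiagonal {M : Type*} [AddCommMonoid M]
    (f : ℕ → ℕ → M) (n : ℕ) :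
    ∑ j ∈ Icc 1 (n + 1), f (j - 1) (n + 1 - j) = ∑ p ∈ antidiagonal n, f p.1 p.2 := by
  rw [Nat.sum_antidiagonal_eq_sum_range_succ f, ← Ico_add_one_right_eq_Icc, sum_Ico_eq_sum_range]
  refine sum_congr (by simp) fun i _ => ?_
  congr 1 <;> omega

namespace PowerSeries

section CommSemiring

variable {R : Type*} [CommSemiring R]

theorem rescale_C (a c : R) : rescale a (C c) = C c := by
  ext (_ | n) <;> simp [coeff_C]

theorem constantCoeff_rescale (a : R) (f : R⟦X⟧) :
    constantCoeff (rescale a f) = constantCoeff f := by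
  rw [← coeff_zero_eq_constantCoeff_apply, coeff_rescale, pow_zero, one_mul,
    coeff_zero_eq_constantCoeff_apply]

end CommSemiring

variable {R : Type*} [CommRing R]

theorem rescale_neg_one_C_mul_X (c : R) : rescale (-1) (C c * X) = -(C c * X) := by
  rw [map_mul, rescale_C, rescale_neg_one_X, mul_neg]

theorem rescale_neg_one_one_add_C_mul_X (c : R) :
    rescale (-1) (1 + C c * X) = 1 - C c * X := by
  rw [map_add, map_one, rescale_neg_one_C_mul_X, sub_eq_add_neg]

theorem rescale_neg_one_one_sub_C_mul_X (c : R) :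
    rescale (-1) (1 - C c * X) = 1 + C c * X := by
  rw [map_sub, map_one, rescale_neg_one_C_mul_X, sub_neg_eq_add]

theorem mul_rescale_neg_one_eq_of_mul_eq {F A Q : R⟦X⟧} (hQ : IsUnit (constantCoeff Q))
    (h : F * rescale (-1) Q = A * Q) : F * rescale (-1) F = A * rescale (-1) A := by
  have h' : rescale (-1) F * Q = rescale (-1) A * rescale (-1) Q := by
    simpa [rescale_rescale] using congrArg (rescale (-1)) h
  have hunit : IsUnit (Q * rescale (-1) Q) := by
    rw [isUnit_iff_constantCoeff, map_mul, constantCoeff_rescale]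
    exact hQ.mul hQ
  refine hunit.mul_right_cancel ?_
  calc F * rescale (-1) F * (Q * rescale (-1) Q)
      = (F * rescale (-1) Q) * (rescale (-1) F * Q) := by ring
    _ = A * rescale (-1) A * (Q * rescale (-1) Q) := by rw [h, h']; ring

theorem coeff_succ_mul_rescale_neg_one_add_two_mul_eq_zero {H : R⟦X⟧} {b : R}
    (h : (H - C b * X) * rescale (-1) (H - C b * X) = 1 - C (b ^ 2) * X ^ 2)
    {n : ℕ} (hn : Odd n) :
    coeff (n + 1) (H * rescale (-1) H) + 2 * b * coeff n H = 0 := by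
  have hH : H * rescale (-1) H + C b * X * (H - rescale (-1) H) = 1 := by
    rw [map_sub, rescale_neg_one_C_mul_X, map_pow] at h
    linear_combination h
  have := congrArg (coeff (n + 1)) hH
  rw [map_add, mul_assoc, coeff_C_mul, coeff_succ_X_mul, map_sub, coeff_rescale, hn.neg_one_pow,
    coeff_one, if_neg n.succ_ne_zero] at this
  linear_combination this

theorem coeff_two_mul_add_two_mul_rescale_neg_one (f : R⟦X⟧) (n : ℕ) :
    coeff (2 * n + 2) (f * rescale (-1) f) = 2 * coeff 0 f * coeff (2 * n + 2) f -
      ∑ p ∈ antidiagonal (2 * n), (-1) ^ p.1 * coeff (p.1 + 1) f * coeff (p.2 + 1) f := by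
  rw [coeff_mul, Nat.antidiagonal_succ_succ', sum_cons, sum_cons, sum_map]
  have hmiddle : ∑ p ∈ antidiagonal (2 * n),
      coeff (p.1 + 1) f * ((-1) ^ (p.2 + 1) * coeff (p.2 + 1) f) =
        -∑ p ∈ antidiagonal (2 * n), (-1) ^ p.1 * coeff (p.1 + 1) f * coeff (p.2 + 1) f := by
    rw [← sum_neg_distrib]
    refine sum_congr rfl fun p hp => ?_
    rw [HasAntidiagonal.mem_antidiagonal] at hp
    rw [pow_succ, neg_one_pow_congr (Nat.even_add.mp (hp ▸ even_two_mul n)).symm]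
    ring
  simp only [Function.Embedding.coe_prodMap, Prod.map_fst, Prod.map_snd, coeff_rescale,
    Nat.succ_eq_add_one, Function.Embedding.coeFn_mk]
  rw [hmiddle, ((even_two_mul n).add even_two).neg_one_pow]
  ring

end PowerSeries

/-- If `ω` is u-admissible (i.e. `1 - t/2 + Σ ω_i t^{i+1}` equals
`(1 - (-1)^a t/2) ∏ (1+u_i t)/(1-u_i t)`), then for every odd positive `k`,
`2ω_k = -ω_{k-1} + Σ_{j=1}^k (-1)^{j-1} ω_{j-1} ω_{k-j}`. -/
theorem u_admissible_implies_admissible (K : Type*) [CommRing K] [Invertible (2 : K)]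
    (a : ℕ) (u : Fin a → K) (ω : ℕ → K)
    (hadm : (1 - PowerSeries.C (R := K) (⅟2) * PowerSeries.X
          + PowerSeries.mk (fun n => if n = 0 then 0 else ω (n - 1)))
        * ∏ i : Fin a, (1 - PowerSeries.C (R := K) (u i) * PowerSeries.X)
      = (1 - PowerSeries.C (R := K) ((-1) ^ a * ⅟2) * PowerSeries.X)
        * ∏ i : Fin a, (1 + PowerSeries.C (R := K) (u i) * PowerSeries.X)) :
    ∀ k : ℕ, Odd k →
      2 * ω k = -ω (k - 1) +
        ∑ j ∈ Finset.Icc 1 k, (-1 : K) ^ (j - 1) * ω (j - 1) * ω (k - j) := by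
  rintro k ⟨m, rfl⟩
  set H : K⟦X⟧ := mk fun n => if n = 0 then 1 else ω (n - 1)
  have hG : 1 - C ⅟2 * X + mk (fun n => if n = 0 then 0 else ω (n - 1)) = H - C ⅟2 * X := by
    have hH : H = 1 + mk fun n => if n = 0 then 0 else ω (n - 1) := by
      ext (_ | n) <;> simp [H, coeff_one]
    rw [hH]
    ring
  have hsq : (H - C ⅟2 * X) * rescale (-1) (H - C ⅟2 * X) = 1 - C (⅟2 ^ 2) * X ^ 2 := by
    have hc : C ((-1 : K) ^ a * ⅟2) ^ 2 = C (⅟2 ^ 2) := by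
      rw [← map_pow, mul_pow, ← pow_mul, pow_mul', neg_one_sq, one_pow, one_mul]
    rw [← hG, mul_rescale_neg_one_eq_of_mul_eq (Q := ∏ i, (1 + C (u i) * X)) (by simp)
      (by simpa only [map_prod, rescale_neg_one_one_add_C_mul_X] using hadm),
      rescale_neg_one_one_sub_C_mul_X]
    linear_combination (-X ^ 2) * hc
  have hcoeff := coeff_succ_mul_rescale_neg_one_add_two_mul_eq_zero hsq (odd_two_mul_add_one m)
  rw [coeff_two_mul_add_two_mul_rescale_neg_one] at hcoeff
  simp only [H, coeff_mk, Nat.add_one_ne_zero, if_true, if_false, Nat.add_one_sub_one,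
    mul_invOf_self', one_mul, mul_one] at hcoeff
  rw [Nat.sum_Icc_one_succ_eq_sum_antidiagonal (fun i j => (-1) ^ i * ω i * ω j),
    Nat.add_sub_cancel]
  linear_combination hcoeff
end

section
/- Let K be a commutative ring with 2 invertible, u_1,...,u_a ∈ K, f(t) = ∏_{i=1}^a (t - u_i) = Σ_{j=0}^a b_j t^j, and suppose ω : ℕ → K is u-admissible (i.e. 1 - t/2 + Σ_{i≥0} ω_i t^{i+1} = (1 - (-1)^a t/2) ∏_{i=1}^a (1+u_i t)/(1-u_i t) in K[[t]]). Then for every k ≥ a, ω_k = -Σ_{j=1}^{a} b_{a-j} ω_{k-j}. -/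
/-!
Let `G(t) = ∏ (1 - u_i t) = t^a f(1/t)`, so the coefficient of `t^j` in `G` is `b_{a-j}` for
`j ≤ a` and `0` beyond; replacing `t` by `-t` turns `G` into `∏ (1 + u_i t)`. With
`W = Σ ω_i t^i`, admissibility says `t G(t) W(t) = (1 - (-1)^a t/2) G(-t) - (1 - t/2) G(t)`.
The right side has degree `≤ a + 1`, and its coefficient of `t^(a+1)` is
`-(-1)^a/2 · (-1)^a g_a + g_a/2 = 0`, where `g_a` is the coefficient of `t^a` in `G`.
Hence `G W` has degree `< a`, and for `k ≥ a` its coefficient of `t^k` is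
`ω_k + Σ_{j=1}^a b_{a-j} ω_{k-j}`.
-/

open PowerSeries

namespace Polynomial

variable {R ι : Type*} [CommRing R]

theorem reflect_prod_X_sub_C (s : Finset ι) (u : ι → R) :
    reflect s.card (∏ i ∈ s, (X - C (u i))) = ∏ i ∈ s, (1 - C (u i) * X) := by
  classical
  induction s using Finset.induction_on with
  | empty => simp
  | insert i s hi ih =>
    have hdeg : (∏ j ∈ s, (X - C (u j))).natDegree ≤ s.card := (natDegree_prod_le _ _).trans <| by
      simpa using Finset.sum_le_card_nsmul s _ 1 fun j _ => natDegree_X_sub_C_le (u j)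
    rw [Finset.prod_insert hi, Finset.prod_insert hi, Finset.card_insert_of_notMem hi, add_comm,
      reflect_mul _ _ (natDegree_X_sub_C_le _) hdeg, ih]
    simp [reflect_sub, reflect_C]

theorem coeff_sum_range_C_mul_X_pow (n : ℕ) (b : ℕ → R) (m : ℕ) :
    (∑ j ∈ Finset.range (n + 1), C (b j) * X ^ j).coeff m = if m ≤ n then b m else 0 := by
  simp

end Polynomial

namespace PowerSeries

variable {R ι : Type*} [CommRing R]

theorem rescale_neg_one_prod_one_sub_C_mul_X (s : Finset ι) (c : ι → R) :
    rescale (-1) (∏ i ∈ s, (1 - C (c i) * X)) = ∏ i ∈ s, (1 + C (c i) * X) := by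
  rw [map_prod]
  refine Finset.prod_congr rfl fun i _ => ?_
  ext (_ | _ | n) <;> simp [coeff_rescale, coeff_C, pow_succ]

theorem coeff_prod_one_sub_C_mul_X (s : Finset ι) (u : ι → R) (j : ℕ) :
    coeff j (∏ i ∈ s, (1 - C (u i) * X)) =
      (∏ i ∈ s, (Polynomial.X - Polynomial.C (u i))).coeff (Polynomial.revAt s.card j) := by
  rw [← Polynomial.coeff_reflect, Polynomial.reflect_prod_X_sub_C, ← Polynomial.coeff_coe,
    ← Polynomial.coeToPowerSeries.ringHom_apply, map_prod Polynomial.coeToPowerSeries.ringHom]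
  simp

theorem mk_eq_X_mul (ω : ℕ → R) :
    mk (fun n => if n = 0 then 0 else ω (n - 1)) = X * mk ω := by
  ext (_ | n) <;> simp [coeff_succ_X_mul]

theorem coeff_mul_mk_of_coeff_eq_zero {G : R⟦X⟧} {a k : ℕ} (ω : ℕ → R)
    (hG : ∀ n, a < n → coeff n G = 0) (hk : a ≤ k) :
    coeff k (G * mk ω) = ∑ j ∈ Finset.range (a + 1), coeff j G * ω (k - j) := by
  rw [coeff_mul, Finset.Nat.sum_antidiagonal_eq_sum_range_succ_mk]
  simp only [coeff_mk]
  symm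
  apply Finset.sum_subset (Finset.range_subset_range.2 (by omega))
  intro j _ hj
  rw [hG j (by simpa using hj), zero_mul]

theorem coeff_succ_one_sub_C_mul_X_mul (c : R) (F : R⟦X⟧) (k : ℕ) :
    coeff (k + 1) ((1 - C c * X) * F) = coeff (k + 1) F - c * coeff k F := by
  rw [sub_mul, one_mul, mul_assoc, map_sub, coeff_C_mul, coeff_succ_X_mul]

theorem coeff_mul_eq_zero_of_mul_eq_rescale {G W : R⟦X⟧} {a : ℕ} (d : R)
    (hG : ∀ n, a < n → coeff n G = 0)
    (h : (1 - C d * X + X * W) * G = (1 - C ((-1) ^ a * d) * X) * rescale (-1) G)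
    {k : ℕ} (hk : a ≤ k) :
    coeff k (G * W) = 0 := by
  have hXGW : X * (G * W) = (1 - C ((-1) ^ a * d) * X) * rescale (-1) G - (1 - C d * X) * G := by
    linear_combination h
  rw [← coeff_succ_X_mul, hXGW, map_sub, coeff_succ_one_sub_C_mul_X_mul,
    coeff_succ_one_sub_C_mul_X_mul, coeff_rescale, coeff_rescale, hG (k + 1) (by omega)]
  rcases hk.eq_or_lt with rfl | hlt
  · have hsq : ((-1 : R) ^ a) * (-1) ^ a = 1 := by simp [← mul_pow]
    linear_combination (-d * coeff a G) * hsq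
  · rw [hG k hlt]
    ring

end PowerSeries

/-- If `f(t) = ∏ (t - u_i) = Σ_{j=0}^a b_j t^j` and `ω` is u-admissible, then
`ω_k = -Σ_{j=1}^a b_{a-j} ω_{k-j}` for every `k ≥ a` (weak admissibility). -/
theorem u_admissible_implies_weakly_admissible (K : Type*) [CommRing K] [Invertible (2 : K)]
    (a : ℕ) (u : Fin a → K) (ω b : ℕ → K)
    (hb : (∏ i : Fin a, (Polynomial.X - Polynomial.C (u i)))
        = ∑ j ∈ Finset.range (a + 1), Polynomial.C (b j) * Polynomial.X ^ j)
    (hadm : (1 - PowerSeries.C (R := K) (⅟2) * PowerSeries.X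
          + PowerSeries.mk (fun n => if n = 0 then 0 else ω (n - 1)))
        * ∏ i : Fin a, (1 - PowerSeries.C (R := K) (u i) * PowerSeries.X)
      = (1 - PowerSeries.C (R := K) ((-1) ^ a * ⅟2) * PowerSeries.X)
        * ∏ i : Fin a, (1 + PowerSeries.C (R := K) (u i) * PowerSeries.X)) :
    ∀ k : ℕ, a ≤ k → ω k = -∑ j ∈ Finset.Icc 1 a, b (a - j) * ω (k - j) := by
  intro k hk
  set G : K⟦X⟧ := ∏ i : Fin a, (1 - C (u i) * X)
  have hG_coeff : ∀ j, coeff j G = if j ≤ a then b (a - j) else 0 := by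
    intro j
    rw [coeff_prod_one_sub_C_mul_X, Finset.card_univ, Fintype.card_fin, hb,
      Polynomial.coeff_sum_range_C_mul_X_pow]
    rcases le_or_gt j a with hj | hj
    · simp [hj, Polynomial.revAt_le]
    · simp [not_le.2 hj, Polynomial.revAt_eq_self_of_lt hj]
  have hG_const : coeff 0 G = 1 := by simp [G, coeff_zero_eq_constantCoeff, map_prod]
  rw [mk_eq_X_mul, ← rescale_neg_one_prod_one_sub_C_mul_X] at hadm
  have hG_deg : ∀ n, a < n → coeff n G = 0 := fun n hn => by simp [hG_coeff, not_le.2 hn]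
  have key := coeff_mul_eq_zero_of_mul_eq_rescale (⅟2) hG_deg hadm hk
  have hsplit : Finset.range (a + 1) = insert 0 (Finset.Icc 1 a) := by
    ext j
    simp only [Finset.mem_range, Finset.mem_insert, Finset.mem_Icc]
    omega
  have hcoeff_Icc : ∀ j ∈ Finset.Icc 1 a, coeff j G = b (a - j) := fun j hj => by
    rw [hG_coeff, if_pos (Finset.mem_Icc.1 hj).2]
  rw [coeff_mul_mk_of_coeff_eq_zero ω hG_deg hk, hsplit, Finset.sum_insert (by simp),
    Finset.sum_congr rfl fun j hj => by rw [hcoeff_Icc j hj], hG_const, Nat.sub_zero] at key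
  linear_combination key
end

section
/- Let K be a commutative ring with 2 invertible and let b_0,...,b_{a-1} ∈ K. Suppose ω, ω' : ℕ → K both satisfy: (i) 2ω_k = -ω_{k-1} + Σ_{j=1}^{k} (-1)^{j-1} ω_{j-1} ω_{k-j} for all odd k ≥ 1, and (ii) ω_k = -Σ_{j=1}^{a} b_{a-j} ω_{k-j} for all k ≥ a (and likewise for ω'). If ω_{2i} = ω'_{2i} for all i with 0 ≤ 2i ≤ 2⌊(a-1)/2⌋, then ω = ω'. -/
/-- A weakly admissible parameter sequence of level `a` is completely determined by
its even-indexed values `ω_0, ω_2, ..., ω_{2⌊(a-1)/2⌋}`. -/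
theorem weakly_admissible_determined_by_even (K : Type*) [CommRing K] [Invertible (2 : K)]
    (a : ℕ) (ha : 0 < a) (b : ℕ → K) (ω ω' : ℕ → K)
    (h1 : ∀ k : ℕ, Odd k →
      2 * ω k = -ω (k - 1) +
        ∑ j ∈ Finset.Icc 1 k, (-1 : K) ^ (j - 1) * ω (j - 1) * ω (k - j))
    (h2 : ∀ k : ℕ, a ≤ k → ω k = -∑ j ∈ Finset.Icc 1 a, b (a - j) * ω (k - j))
    (h1' : ∀ k : ℕ, Odd k →
      2 * ω' k = -ω' (k - 1) +
        ∑ j ∈ Finset.Icc 1 k, (-1 : K) ^ (j - 1) * ω' (j - 1) * ω' (k - j))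
    (h2' : ∀ k : ℕ, a ≤ k → ω' k = -∑ j ∈ Finset.Icc 1 a, b (a - j) * ω' (k - j))
    (heven : ∀ i : ℕ, i ≤ (a - 1) / 2 → ω (2 * i) = ω' (2 * i)) :
    ω = ω' := by
  funext k
  induction k using Nat.strong_induction_on with
  | _ k ih =>
    rcases lt_or_ge k a with hk | hk
    · rcases Nat.even_or_odd k with he | ho
      · obtain ⟨i, rfl⟩ := he
        have hi : i ≤ (a - 1) / 2 := by omega
        simpa [two_mul] using heven i hi
      · have hk1 : 1 ≤ k := ho.pos
        have key : 2 * ω k = 2 * ω' k := by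
          rw [h1 k ho, h1' k ho, ih (k - 1) (by omega)]
          congr 1
          apply Finset.sum_congr rfl
          intro j hj
          simp only [Finset.mem_Icc] at hj
          rw [ih (j - 1) (by omega), ih (k - j) (by omega)]
        calc ω k = ⅟(2 : K) * (2 * ω k) := (invOf_mul_cancel_left 2 (ω k)).symm
          _ = ⅟(2 : K) * (2 * ω' k) := by rw [key]
          _ = ω' k := invOf_mul_cancel_left 2 (ω' k)
    · rw [h2 k hk, h2' k hk]
      congr 1
      apply Finset.sum_congr rfl
      intro j hj
      simp only [Finset.mem_Icc] at hj
      rw [ih (k - j) (by omega)]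
end
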